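/- If I(t) ≤ M for all t ≥ 0 and b·M < ξ, then Z(t) = Z(0)·exp(∫₀ᵗ(b·I(s)−ξ)ds) tends to 0 as t → ∞ (skeptics die out when mediums stay below the critical threshold ξ/b). -/

import Mathlib

open Filter Real

theorem intervalIntegral_le_mul_sub_of_le {f : ℝ → ℝ} {a t c : ℝ} (hat : a ≤ t)
    (hf : IntervalIntegrable f MeasureTheory.volume a t) (hle : ∀ s ∈ Set.Icc a t, f s ≤ c) :
    ∫ s in a..t, f s ≤ c * (t - a) := by
  calc ∫ s in a..t, f s ≤ ∫ _ in a..t, c :=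
        intervalIntegral.integral_mono_on hat hf intervalIntegrable_const hle
    _ = c * (t - a) := by rw [intervalIntegral.integral_const, smul_eq_mul, mul_comm]

theorem tendsto_intervalIntegral_atBot_of_le_neg {f : ℝ → ℝ} {a c : ℝ}
    (hf : ∀ t, IntervalIntegrable f MeasureTheory.volume a t) (hc : c < 0)
    (hle : ∀ s, a ≤ s → f s ≤ c) :
    Tendsto (fun t => ∫ s in a..t, f s) atTop atBot := by
  have hlinear : Tendsto (fun t => c * (t - a)) atTop atBot :=
    (tendsto_atTop_add_const_right _ (-a) tendsto_id).const_mul_atTop_of_neg hc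
  refine tendsto_atBot_mono' atTop ?_ hlinear
  filter_upwards [eventually_ge_atTop a] with t hat
  exact intervalIntegral_le_mul_sub_of_le hat (hf t) fun s hs => hle s hs.1

theorem skeptics_die_out_general (b ξ Z0 M : ℝ) (I : ℝ → ℝ) (hI : Continuous I)
    (hb : 0 < b)
    (hM : ∀ t, 0 ≤ t → I t ≤ M) (hcrit : b * M < ξ) :
    Filter.Tendsto (fun t => Z0 * Real.exp (∫ s in (0:ℝ)..t, b * I s - ξ))
      Filter.atTop (nhds 0) := by
  have hintegrable : ∀ t, IntervalIntegrable (fun s => b * I s - ξ) MeasureTheory.volume 0 t :=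
    fun t => ((continuous_const.mul hI).sub continuous_const).intervalIntegrable 0 t
  have hle : ∀ s, 0 ≤ s → b * I s - ξ ≤ b * M - ξ := fun s hs =>
    sub_le_sub_right (mul_le_mul_of_nonneg_left (hM s hs) hb.le) ξ
  have hexponent := tendsto_intervalIntegral_atBot_of_le_neg hintegrable (by linarith) hle
  simpa using (tendsto_exp_atBot.comp hexponent).const_mul Z0

theorem skeptics_die_out (b ξ Z0 M : ℝ) (I : ℝ → ℝ) (hI : Continuous I)
    (hb : 0 < b) (hξ : 0 < ξ) (hZ0 : 0 < Z0)
    (hM : ∀ t, 0 ≤ t → I t ≤ M) (hcrit : b * M < ξ) :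
    Filter.Tendsto (fun t => Z0 * Real.exp (∫ s in (0:ℝ)..t, b * I s - ξ))
      Filter.atTop (nhds 0) :=
  skeptics_die_out_general b ξ Z0 M I hI hb hM hcrit
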